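/- Let G be the semi-Markovian causal graph with observed variables V = {X₁, X₂, Y₁, Y₂}, unobserved variables U = {U₁, U₂}, and directed edges X₁ → Y₁, X₂ → Y₂, U₁ → X₁, U₁ → X₂, U₂ → Y₁, U₂ → Y₂. Then there exist SEMs M₁, M₂ ∈ 𝕄(G), with all observed domains equal to {0,1}, such that P^{M₁}(v) = P^{M₂}(v) for every v ∈ dom(V), yet P^{M₁}_{(X₁,X₂)=(0,1)}(Y₁=0, Y₂=0) ≠ P^{M₂}_{(X₁,X₂)=(0,1)}(Y₁=0, Y₂=0). Consequently, if in the definition of identifiability the class 𝕄⁺(G) is replaced by 𝕄(G) (i.e., the positivity assumption is dropped), the causal effect of {X₁, X₂} on {Y₁, Y₂} is not identifiable from G. -/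

import Mathlib

open scoped Classical

/-- A semi-Markovian causal graph: a DAG over a finite vertex set partitioned into
observed (`obs`) and unobserved (`unobs`) variables, where every unobserved variable
has no parents and exactly two (distinct, observed) children. -/
structure CausalGraph (ν : Type) [Fintype ν] [DecidableEq ν] where
  obs : Finset ν
  unobs : Finset ν
  disj : Disjoint obs unobs
  E : ν → ν → Prop
  edge_mem : ∀ x y, E x y → x ∈ obs ∪ unobs ∧ y ∈ obs ∪ unobs
  acyclic : ∀ x, ¬ Relation.TransGen E x x
  unobs_no_parent : ∀ u ∈ unobs, ∀ w, ¬ E w u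
  unobs_two_children : ∀ u ∈ unobs,
    ∃ a b, a ≠ b ∧ a ∈ obs ∧ b ∈ obs ∧ (∀ w, E u w ↔ w = a ∨ w = b)

namespace CausalGraph

variable {ν : Type} [Fintype ν] [DecidableEq ν]

def verts (G : CausalGraph ν) : Finset ν := G.obs ∪ G.unobs

/-- A structural equation model over the causal graph `G`: finite nonempty domains
(encoded as finite sets of naturals), a pmf for each unobserved variable, and a
conditional pmf (given an assignment to the parents) for each observed variable. -/
structure SEM (G : CausalGraph ν) where
  dom : ν → Finset ℕ
  dom_ne : ∀ x, (dom x).Nonempty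
  pU : ν → ℕ → ℝ
  pU_nonneg : ∀ u n, 0 ≤ pU u n
  pU_sum : ∀ u ∈ G.unobs, ∑ n ∈ dom u, pU u n = 1
  pO : ν → ℕ → (ν → ℕ) → ℝ
  pO_nonneg : ∀ x n pa, 0 ≤ pO x n pa
  pO_sum : ∀ x ∈ G.obs, ∀ pa : ν → ℕ, ∑ n ∈ dom x, pO x n pa = 1
  pO_par : ∀ x n (pa pa' : ν → ℕ), (∀ p, G.E p x → pa p = pa' p) → pO x n pa = pO x n pa'

namespace SEM

variable {G : CausalGraph ν}

/-- Full assignments: all variables of `G` get values in their domains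
(non-vertices are pinned to `0`). -/
noncomputable def fullAssign (M : SEM G) : Finset (ν → ℕ) :=
  Fintype.piFinset (fun x => if x ∈ G.verts then M.dom x else {0})

/-- Observed assignments `dom(V)`: observed variables get values in their domains
(all other coordinates are pinned to `0`). -/
noncomputable def obsAssign (M : SEM G) : Finset (ν → ℕ) :=
  Fintype.piFinset (fun x => if x ∈ G.obs then M.dom x else {0})

/-- `Q^M[S](v) = Σ_u Π_{X ∈ S} P(x | pa_G(X)) Π_{U} P(u)`. -/
noncomputable def Q (M : SEM G) (S : Finset ν) (v : ν → ℕ) : ℝ :=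
  ∑ w ∈ M.fullAssign.filter (fun w => ∀ x ∈ G.obs, w x = v x),
    (∏ x ∈ S, M.pO x (w x) w) * ∏ u ∈ G.unobs, M.pU u (w u)

/-- The observational distribution `P^M(v) = Q^M[V](v)`. -/
noncomputable def P (M : SEM G) (v : ν → ℕ) : ℝ := M.Q G.obs v

/-- Post-interventional probability `P^M_x(y)`: sum of `Q^M[V∖X]` over all observed
realizations consistent with `x` on `X` and `y` on `Y`. -/
noncomputable def Px (M : SEM G) (X : Finset ν) (x : ν → ℕ) (Y : Finset ν) (y : ν → ℕ) : ℝ :=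
  ∑ v ∈ M.obsAssign.filter (fun v => (∀ i ∈ X, v i = x i) ∧ (∀ i ∈ Y, v i = y i)),
    M.Q (G.obs \ X) v

/-- `M ∈ 𝕄⁺(G)`: strictly positive observational distribution. -/
def positive (M : SEM G) : Prop := ∀ v ∈ M.obsAssign, 0 < M.P v

end SEM

/-- The causal effect of `X` on `Y` is identifiable from `G`. -/
def Identifiable (G : CausalGraph ν) (X Y : Finset ν) : Prop :=
  ∀ M₁ M₂ : SEM G, M₁.positive → M₂.positive →
    (∀ i ∈ G.obs, M₁.dom i = M₂.dom i) →
    (∀ v ∈ M₁.obsAssign, M₁.P v = M₂.P v) →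
    ∀ x y : ν → ℕ, (∀ i ∈ X, x i ∈ M₁.dom i) → (∀ i ∈ Y, y i ∈ M₁.dom i) →
      M₁.Px X x Y y = M₂.Px X x Y y

/-- `Q[S]` is identifiable from `G`. -/
def QIdentifiable (G : CausalGraph ν) (S : Finset ν) : Prop :=
  Identifiable G (G.obs \ S) S

/-- The causal effect of `X` on `Y` is g-identifiable from `(𝔸, G)`. -/
def GIdentifiable (G : CausalGraph ν) (𝔸 : Finset (Finset ν)) (X Y : Finset ν) : Prop :=
  ∀ M₁ M₂ : SEM G, M₁.positive → M₂.positive →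
    (∀ i ∈ G.obs, M₁.dom i = M₂.dom i) →
    (∀ A ∈ 𝔸, ∀ v ∈ M₁.obsAssign, M₁.Q A v = M₂.Q A v) →
    ∀ x y : ν → ℕ, (∀ i ∈ X, x i ∈ M₁.dom i) → (∀ i ∈ Y, y i ∈ M₁.dom i) →
      M₁.Px X x Y y = M₂.Px X x Y y

/-- `Q[S]` is g-identifiable from `(𝔸, G)`. -/
def QGIdentifiable (G : CausalGraph ν) (𝔸 : Finset (Finset ν)) (S : Finset ν) : Prop :=
  GIdentifiable G 𝔸 (G.obs \ S) S

/-- Bidirected edge of `G_X` between `a` and `b`: distinct members of `X` sharing an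
unobserved parent (whose two children then necessarily both lie in `X`). -/
def biEdge (G : CausalGraph ν) (X : Finset ν) (a b : ν) : Prop :=
  a ≠ b ∧ a ∈ X ∧ b ∈ X ∧ ∃ u ∈ G.unobs, G.E u a ∧ G.E u b

/-- `X` is a single c-component of `G`. -/
def SingleC (G : CausalGraph ν) (X : Finset ν) : Prop :=
  X.Nonempty ∧ ∀ a ∈ X, ∀ b ∈ X, Relation.ReflTransGen (G.biEdge X) a b

/-- The c-components of `S`: connected components of the bidirected part of `G_S`. -/
noncomputable def cComponents (G : CausalGraph ν) (S : Finset ν) : Finset (Finset ν) :=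
  S.image (fun a => S.filter (fun b => Relation.ReflTransGen (G.biEdge S) a b))

/-- Directed edge of `G_X` (both endpoints in `X`). -/
def dirEdgeIn (G : CausalGraph ν) (X : Finset ν) (a b : ν) : Prop :=
  a ∈ X ∧ b ∈ X ∧ G.E a b

/-- `Anc_Y(G_X)`: members of `X` having a directed path in `G_X` to some member of `Y`. -/
noncomputable def ancIn (G : CausalGraph ν) (X Y : Finset ν) : Finset ν :=
  X.filter (fun a => ∃ y ∈ Y, Relation.ReflTransGen (G.dirEdgeIn X) a y)

/-- Unobserved vertices of the induced subgraph `G[A]`: unobserved vertices of `G`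
both of whose children lie in `A`. -/
noncomputable def inducedUnobs (G : CausalGraph ν) (A : Finset ν) : Finset ν :=
  G.unobs.filter (fun u => ∀ w, G.E u w → w ∈ A)

/-- The induced subgraph `G[A]`. -/
noncomputable def induced (G : CausalGraph ν) (A : Finset ν) : CausalGraph ν where
  obs := A ∩ G.obs
  unobs := G.inducedUnobs A
  disj := G.disj.mono Finset.inter_subset_right (Finset.filter_subset _ _)
  E x y := G.E x y ∧ x ∈ (A ∩ G.obs) ∪ G.inducedUnobs A ∧ y ∈ (A ∩ G.obs) ∪ G.inducedUnobs A
  edge_mem := fun x y h => ⟨h.2.1, h.2.2⟩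
  acyclic := by
    intro x h
    have key : ∀ a b, Relation.TransGen
        (fun x y => G.E x y ∧ x ∈ (A ∩ G.obs) ∪ G.inducedUnobs A ∧
          y ∈ (A ∩ G.obs) ∪ G.inducedUnobs A) a b → Relation.TransGen G.E a b := by
      intro a b hab
      induction hab with
      | single hab => exact Relation.TransGen.single hab.1
      | tail _ hbc ih => exact Relation.TransGen.tail ih hbc.1
    exact G.acyclic x (key x x h)
  unobs_no_parent := fun u hu w hw =>
    G.unobs_no_parent u (Finset.mem_filter.mp hu).1 w hw.1
  unobs_two_children := by
    intro u hu
    have hu' := Finset.mem_filter.mp hu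
    obtain ⟨a, b, hab, ha, hb, hiff⟩ := G.unobs_two_children u hu'.1
    have hEa : G.E u a := (hiff a).mpr (Or.inl rfl)
    have hEb : G.E u b := (hiff b).mpr (Or.inr rfl)
    have haA : a ∈ A := hu'.2 a hEa
    have hbA : b ∈ A := hu'.2 b hEb
    refine ⟨a, b, hab, Finset.mem_inter.mpr ⟨haA, ha⟩, Finset.mem_inter.mpr ⟨hbA, hb⟩, ?_⟩
    intro w
    constructor
    · intro hw; exact (hiff w).mp hw.1
    · rintro (rfl | rfl)
      · exact ⟨hEa, Finset.mem_union.mpr (Or.inr hu),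
          Finset.mem_union.mpr (Or.inl (Finset.mem_inter.mpr ⟨haA, ha⟩))⟩
      · exact ⟨hEb, Finset.mem_union.mpr (Or.inr hu),
          Finset.mem_union.mpr (Or.inl (Finset.mem_inter.mpr ⟨hbA, hb⟩))⟩

/-- `H` is a subgraph of `G`. -/
def IsSubgraph (H G : CausalGraph ν) : Prop :=
  H.obs ⊆ G.obs ∧ H.unobs ⊆ G.unobs ∧ ∀ a b, H.E a b → G.E a b

/-- `H` is an `R`-rooted c-forest: `R` is the root set of `H`, the observed vertex set of
`H` is a single c-component, and every observed vertex has at most one child in `H`. -/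
def IsCForest (H : CausalGraph ν) (R : Finset ν) : Prop :=
  H.obs.filter (fun x => ∀ w, ¬ H.E x w) = R ∧
  H.SingleC H.obs ∧
  ∀ x ∈ H.obs, ∀ w w', H.E x w → H.E x w' → w = w'

end CausalGraph

/-- Identifiability with the positivity assumption dropped (models range over all of
`𝕄(G)` rather than `𝕄⁺(G)`). -/
def CausalGraph.IdentifiableNP {ν : Type} [Fintype ν] [DecidableEq ν]
    (G : CausalGraph ν) (X Y : Finset ν) : Prop :=
  ∀ M₁ M₂ : CausalGraph.SEM G,
    (∀ i ∈ G.obs, M₁.dom i = M₂.dom i) →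
    (∀ v ∈ M₁.obsAssign, M₁.P v = M₂.P v) →
    ∀ x y : ν → ℕ, (∀ i ∈ X, x i ∈ M₁.dom i) → (∀ i ∈ Y, y i ∈ M₁.dom i) →
      M₁.Px X x Y y = M₂.Px X x Y y

/-!
Positivity fails in a model where `X₂` is always `0` observationally: the mechanism of `Y₂`
at `X₂ = 1` is then never exercised by the observational distribution, yet it is exactly
what the intervention `(X₁, X₂) := (0, 1)` reads. With trivial noise and deterministic binary
mechanisms, let `Y₂` copy `X₂` in `M₁` and be constantly `0` in `M₂`, all other variables
being constantly `0`. Both models put all observational mass on the all-zero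
configuration, while `P_{(0,1)}(Y₁ = 0, Y₂ = 0)` is `0` in `M₁` and `1` in `M₂`.
Vertices `0, 1, 2, 3` are `X₁, X₂, Y₁, Y₂`, and `4, 5` are `U₁, U₂`.
-/

namespace CausalGraph

variable {ν : Type} [Fintype ν] [DecidableEq ν] {G : CausalGraph ν}

namespace SEM

theorem eq_of_mem_obsAssign {M : SEM G} {v w : ν → ℕ} (hv : v ∈ M.obsAssign)
    (hw : w ∈ M.obsAssign) (h : ∀ i ∈ G.obs, v i = w i) : v = w := by
  simp only [obsAssign, Fintype.mem_piFinset] at hv hw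
  funext i
  by_cases hi : i ∈ G.obs
  · exact h i hi
  · have hvi := hv i
    have hwi := hw i
    simp only [hi, if_false, Finset.mem_singleton] at hvi hwi
    rw [hvi, hwi]

theorem Q_eq_prod_of_dom_unobs (M : SEM G) (hU : ∀ u ∈ G.unobs, M.dom u = {0})
    (S : Finset ν) {v : ν → ℕ} (hv : v ∈ M.obsAssign) :
    M.Q S v = ∏ x ∈ S, M.pO x (v x) v := by
  have hv0 : ∀ i ∉ G.obs, v i = 0 := fun i hi => by
    simpa [obsAssign, hi] using Fintype.mem_piFinset.mp hv i
  have hfilter : M.fullAssign.filter (fun w => ∀ x ∈ G.obs, w x = v x) = {v} := by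
    refine Finset.eq_singleton_iff_unique_mem.mpr ⟨?_, fun w hw => ?_⟩
    · refine Finset.mem_filter.mpr ⟨Fintype.mem_piFinset.mpr fun i => ?_, fun _ _ => rfl⟩
      by_cases ho : i ∈ G.obs
      · simpa [verts, ho, obsAssign] using Fintype.mem_piFinset.mp hv i
      · by_cases hu : i ∈ G.unobs <;> simp [verts, ho, hu, hU, hv0]
    · obtain ⟨hw, hagree⟩ := Finset.mem_filter.mp hw
      funext i
      by_cases ho : i ∈ G.obs
      · exact hagree i ho
      · have := Fintype.mem_piFinset.mp hw i
        by_cases hu : i ∈ G.unobs <;> simp_all [verts]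
  have hnoise : ∏ u ∈ G.unobs, M.pU u (v u) = 1 := Finset.prod_eq_one fun u hu => by
    have hsum := M.pU_sum u hu
    rwa [hU u hu, Finset.sum_singleton, ← hv0 u (Finset.disjoint_right.mp G.disj hu)] at hsum
  rw [Q, hfilter, Finset.sum_singleton, hnoise, mul_one]

theorem Px_eq_Q_of_obs_subset (M : SEM G) {X Y : Finset ν} (hXY : G.obs ⊆ X ∪ Y)
    {x y v : ν → ℕ} (hv : v ∈ M.obsAssign) (hx : ∀ i ∈ X, v i = x i)
    (hy : ∀ i ∈ Y, v i = y i) :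
    M.Px X x Y y = M.Q (G.obs \ X) v := by
  have hfilter : M.obsAssign.filter
      (fun w => (∀ i ∈ X, w i = x i) ∧ (∀ i ∈ Y, w i = y i)) = {v} := by
    refine Finset.eq_singleton_iff_unique_mem.mpr
      ⟨Finset.mem_filter.mpr ⟨hv, hx, hy⟩, fun w hw => ?_⟩
    obtain ⟨hw, hwx, hwy⟩ := Finset.mem_filter.mp hw
    refine eq_of_mem_obsAssign hw hv fun i hi => ?_
    rcases Finset.mem_union.mp (hXY hi) with hiX | hiY
    · rw [hwx i hiX, hx i hiX]
    · rw [hwy i hiY, hy i hiY]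
  rw [Px, hfilter, Finset.sum_singleton]

end SEM

def DependsOnParents (G : CausalGraph ν) (f : ν → (ν → ℕ) → Bool) : Prop :=
  ∀ x (pa pa' : ν → ℕ), (∀ p, G.E p x → pa p = pa' p) → f x pa = f x pa'

noncomputable def deterministicSEM (G : CausalGraph ν) (f : ν → (ν → ℕ) → Bool)
    (hf : G.DependsOnParents f) : SEM G where
  dom i := if i ∈ G.obs then {0, 1} else {0}
  dom_ne i := by split <;> simp
  pU _ n := if n = 0 then 1 else 0
  pU_nonneg _ n := by split <;> norm_num
  pU_sum u hu := by simp [Finset.disjoint_right.mp G.disj hu]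
  pO x n pa := if n = (f x pa).toNat then 1 else 0
  pO_nonneg x n pa := by split <;> norm_num
  pO_sum x hx pa := by cases f x pa <;> simp [hx]
  pO_par x n pa pa' h := by rw [hf x pa pa' h]

theorem deterministicSEM_Q (f : ν → (ν → ℕ) → Bool) (hf : G.DependsOnParents f)
    (S : Finset ν) {v : ν → ℕ} (hv : v ∈ (G.deterministicSEM f hf).obsAssign) :
    (G.deterministicSEM f hf).Q S v = if ∀ x ∈ S, v x = (f x v).toNat then 1 else 0 := by
  have hU : ∀ u ∈ G.unobs, (G.deterministicSEM f hf).dom u = {0} := fun u hu =>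
    if_neg (Finset.disjoint_right.mp G.disj hu)
  rw [SEM.Q_eq_prod_of_dom_unobs _ hU S hv]
  simp only [deterministicSEM, Finset.prod_boole]
  congr

theorem deterministicSEM_Px (f : ν → (ν → ℕ) → Bool) (hf : G.DependsOnParents f)
    {X Y : Finset ν} (hXY : G.obs ⊆ X ∪ Y) {x y v : ν → ℕ}
    (hv : v ∈ (G.deterministicSEM f hf).obsAssign) (hx : ∀ i ∈ X, v i = x i)
    (hy : ∀ i ∈ Y, v i = y i) :
    (G.deterministicSEM f hf).Px X x Y y =
      if ∀ i ∈ G.obs \ X, v i = (f i v).toNat then 1 else 0 := by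
  rw [SEM.Px_eq_Q_of_obs_subset _ hXY hv hx hy, deterministicSEM_Q f hf _ hv]

end CausalGraph

section Counterexample

open CausalGraph

variable {G : CausalGraph (Fin 6)}

def copyX₂ (x : Fin 6) (pa : Fin 6 → ℕ) : Bool := x = 3 ∧ pa 1 = 1

theorem dependsOnParents_copyX₂ (h13 : G.E 1 3) : G.DependsOnParents copyX₂ := by
  intro x pa pa' h
  by_cases hx : x = 3
  · subst hx
    simp only [copyX₂, h 1 h13]
  · simp [copyX₂, hx]

theorem dependsOnParents_const_false : G.DependsOnParents fun _ _ => false :=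
  fun _ _ _ _ => rfl

theorem copyX₂_fixed_iff (v : Fin 6 → ℕ) :
    (∀ x ∈ ({0, 1, 2, 3} : Finset (Fin 6)), v x = (copyX₂ x v).toNat) ↔
      ∀ x ∈ ({0, 1, 2, 3} : Finset (Fin 6)), v x = (false : Bool).toNat := by
  by_cases h : v 1 = 1 <;> simp [h, copyX₂]

theorem intervened_mem_obsAssign (hobs : G.obs = {0, 1, 2, 3})
    (f : Fin 6 → (Fin 6 → ℕ) → Bool) (hf : G.DependsOnParents f) :
    (fun i : Fin 6 => if i = 1 then 1 else 0) ∈ (G.deterministicSEM f hf).obsAssign := by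
  refine Fintype.mem_piFinset.mpr fun i => ?_
  by_cases hi : i ∈ G.obs <;> by_cases h1 : i = 1 <;> simp_all [deterministicSEM]

end Counterexample

theorem not_identifiable_without_positivity_general
    (G : CausalGraph (Fin 6))
    (hobs : G.obs = {0, 1, 2, 3})
    (hE : ∀ a b : Fin 6, G.E a b ↔
      ((a, b) = (0, 2) ∨ (a, b) = (1, 3) ∨ (a, b) = (4, 0) ∨
       (a, b) = (4, 1) ∨ (a, b) = (5, 2) ∨ (a, b) = (5, 3))) :
    (∃ M₁ M₂ : CausalGraph.SEM G,
      (∀ i ∈ G.obs, M₁.dom i = {0, 1}) ∧ (∀ i ∈ G.obs, M₂.dom i = {0, 1}) ∧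
      (∀ v ∈ M₁.obsAssign, M₁.P v = M₂.P v) ∧
      M₁.Px {0, 1} (fun i => if i = 0 then 0 else 1) {2, 3} (fun _ => 0) ≠
        M₂.Px {0, 1} (fun i => if i = 0 then 0 else 1) {2, 3} (fun _ => 0)) ∧
    ¬ G.IdentifiableNP {0, 1} {2, 3} := by
  set M₁ := G.deterministicSEM copyX₂ (dependsOnParents_copyX₂ ((hE 1 3).mpr (by simp)))
  set M₂ := G.deterministicSEM (fun _ _ => false) dependsOnParents_const_false
  have hP : ∀ v ∈ M₁.obsAssign, M₁.P v = M₂.P v := fun v hv => by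
    rw [CausalGraph.SEM.P, CausalGraph.SEM.P, CausalGraph.deterministicSEM_Q _ _ _ hv,
      CausalGraph.deterministicSEM_Q (fun _ _ => false) _ _ hv, hobs]
    simp only [copyX₂_fixed_iff]
    congr
  have hne : M₁.Px {0, 1} (fun i => if i = 0 then 0 else 1) {2, 3} (fun _ => 0) ≠
      M₂.Px {0, 1} (fun i => if i = 0 then 0 else 1) {2, 3} (fun _ => 0) := by
    have hXY : G.obs ⊆ {0, 1} ∪ {2, 3} := by rw [hobs]; decide
    rw [CausalGraph.deterministicSEM_Px _ _ hXY (intervened_mem_obsAssign hobs _ _)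
        (by decide) (by decide),
      CausalGraph.deterministicSEM_Px _ _ hXY (intervened_mem_obsAssign hobs _ _)
        (by decide) (by decide), hobs]
    simp [copyX₂]
  have hdom : ∀ i ∈ G.obs, M₁.dom i = {0, 1} := fun i hi => if_pos hi
  refine ⟨⟨M₁, M₂, hdom, hdom, hP, hne⟩, fun hid => hne (hid M₁ M₂ (fun _ _ => rfl) hP _ _ ?_ ?_)⟩
  · intro i hi
    rw [hdom i (by rw [hobs]; fin_cases hi <;> decide)]
    split <;> simp
  · intro i hi
    simp [hdom i (by rw [hobs]; fin_cases hi <;> decide)]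

/-- Example 2. In the graph with `V = {X₁, X₂, Y₁, Y₂}`
(vertices `0,1,2,3`), `U = {U₁, U₂}` (vertices `4,5`) and edges `X₁ → Y₁`, `X₂ → Y₂`,
`U₁ → X₁`, `U₁ → X₂`, `U₂ → Y₁`, `U₂ → Y₂`, there are SEMs `M₁, M₂ ∈ 𝕄(G)` with binary
observed domains, equal observational distributions, and different post-interventional
probabilities `P_{(X₁,X₂)=(0,1)}(Y₁=0, Y₂=0)`; hence, dropping positivity, the causal
effect of `{X₁, X₂}` on `{Y₁, Y₂}` is not identifiable from `G`. -/
theorem not_identifiable_without_positivity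
    (G : CausalGraph (Fin 6))
    (hobs : G.obs = {0, 1, 2, 3}) (hunobs : G.unobs = {4, 5})
    (hE : ∀ a b : Fin 6, G.E a b ↔
      ((a, b) = (0, 2) ∨ (a, b) = (1, 3) ∨ (a, b) = (4, 0) ∨
       (a, b) = (4, 1) ∨ (a, b) = (5, 2) ∨ (a, b) = (5, 3))) :
    (∃ M₁ M₂ : CausalGraph.SEM G,
      (∀ i ∈ G.obs, M₁.dom i = {0, 1}) ∧ (∀ i ∈ G.obs, M₂.dom i = {0, 1}) ∧
      (∀ v ∈ M₁.obsAssign, M₁.P v = M₂.P v) ∧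
      M₁.Px {0, 1} (fun i => if i = 0 then 0 else 1) {2, 3} (fun _ => 0) ≠
        M₂.Px {0, 1} (fun i => if i = 0 then 0 else 1) {2, 3} (fun _ => 0)) ∧
    ¬ G.IdentifiableNP {0, 1} {2, 3} :=
  not_identifiable_without_positivity_general G hobs hE
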